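/- Let ρ, c, k, ℓ, γ, q₀ be positive reals, α = k/(ρc), 0 < ε < 1, and suppose q₀ > √(γ(1-ε)ρℓk/2). Let ω > 0 be the unique solution of [x + (γ(1-ε)k/(2q₀√α))·exp(x²)]·exp(x²) = q₀/(ρℓ√α), and set D₀ = (q₀√(πα)/k)·erf(ω). Then D₀ > 0 and ω is the unique positive solution of the equation G₂(x) = D₀c/(ℓ√π), where F∞(x) = exp(-x²)/erf(x), G₀(x) = x + (γ(1-ε)√π/(2D₀))·(1/F∞(x)), and G₂(x) = G₀(x)/F∞(x). -/

import Mathlib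

/-!
With `E x = erf x · exp (x²)` and `K = γ(1-ε)√π/(2D₀)`, the definitions give
`G₂ x = (x + K E x) E x`. The choice of `D₀` makes `K erf ω` the coefficient of the flux
equation, so `G₂ ω` is `erf ω` times its right-hand side, which is `D₀c/(ℓ√π)`. Since `E` is
positive and strictly increasing on `(0, ∞)`, so is `G₂`, whence uniqueness.
-/

open Real Filter Set Topology

/-- The error function `erf x = (2/√π) ∫₀ˣ exp(-t²) dt`. -/
noncomputable def erf (x : ℝ) : ℝ := (2 / Real.sqrt π) * ∫ t in (0:ℝ)..x, Real.exp (-t ^ 2)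

lemma erf_strictMono : StrictMono erf := by
  intro a b hab
  have hint : ∀ s t : ℝ, IntervalIntegrable (fun t => exp (-t ^ 2)) MeasureTheory.volume s t :=
    fun s t => (by fun_prop : Continuous fun t : ℝ => exp (-t ^ 2)).intervalIntegrable s t
  have hsplit := intervalIntegral.integral_add_adjacent_intervals (hint 0 a) (hint a b)
  have hpos : 0 < ∫ t in a..b, exp (-t ^ 2) :=
    intervalIntegral.intervalIntegral_pos_of_pos_on (hint a b) (fun x _ => exp_pos _) hab
  unfold erf
  gcongr
  linarith

lemma erf_zero : erf 0 = 0 := by simp [erf]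

lemma erf_pos {x : ℝ} (hx : 0 < x) : 0 < erf x := erf_zero ▸ erf_strictMono hx

lemma strictMonoOn_erf_mul_exp_sq : StrictMonoOn (fun x => erf x * exp (x ^ 2)) (Ioi 0) := by
  intro a (ha : 0 < a) b (_ : 0 < b) hab
  have hexp : exp (a ^ 2) < exp (b ^ 2) := exp_lt_exp.2 (by nlinarith)
  exact mul_lt_mul'' (erf_strictMono hab) hexp (erf_pos ha).le (exp_pos _).le

lemma strictMonoOn_add_mul_mul {f : ℝ → ℝ} (hf : StrictMonoOn f (Ioi 0))
    (hf_pos : ∀ x, 0 < x → 0 < f x) {K : ℝ} (hK : 0 ≤ K) :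
    StrictMonoOn (fun x => (x + K * f x) * f x) (Ioi 0) := by
  intro a (ha : 0 < a) b hb hab
  have hfab := hf ha hb hab
  have hsum : a + K * f a < b + K * f b := by
    nlinarith [mul_le_mul_of_nonneg_left hfab.le hK]
  have hfa := hf_pos a ha
  exact mul_lt_mul'' hsum hfab (by positivity) hfa.le

lemma flux_rhs_mul_erf {ρ c k ℓ q₀ α D₀ e : ℝ} (hρ : 0 < ρ) (hc : 0 < c) (hk : 0 < k)
    (hℓ : 0 < ℓ) (hα : α = k / (ρ * c)) (hD₀ : D₀ = (q₀ * √(π * α) / k) * e) :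
    q₀ / (ρ * ℓ * √α) * e = D₀ * c / (ℓ * √π) := by
  have hαpos : 0 < α := by rw [hα]; positivity
  have hsqrt_sq : √α ^ 2 = α := sq_sqrt hαpos.le
  have hk_eq : k = α * (ρ * c) := by rw [hα]; field_simp
  have hsπ : 0 < √π := sqrt_pos.2 pi_pos
  have hsα : 0 < √α := sqrt_pos.2 hαpos
  rw [hD₀, sqrt_mul pi_pos.le, hk_eq]
  field_simp
  linear_combination -(q₀ * e) * hsqrt_sq

theorem stmt_18_general (ρ c k ℓ γ q₀ α ε ω D₀ : ℝ)
    (hρ : 0 < ρ) (hc : 0 < c) (hk : 0 < k) (hℓ : 0 < ℓ) (hγ : 0 < γ) (hq0 : 0 < q₀)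
    (hα : α = k / (ρ * c)) (hε1 : ε < 1)
    (hωpos : 0 < ω)
    (hωeq : (ω + (γ * (1 - ε) * k / (2 * q₀ * Real.sqrt α)) * Real.exp (ω ^ 2)) *
      Real.exp (ω ^ 2) = q₀ / (ρ * ℓ * Real.sqrt α))
    (hD₀ : D₀ = (q₀ * Real.sqrt (π * α) / k) * erf ω)
    (Finf G₀ G₂ : ℝ → ℝ)
    (hFinf : ∀ x, Finf x = Real.exp (-x ^ 2) / erf x)
    (hG₀ : ∀ x, G₀ x = x + (γ * (1 - ε) * Real.sqrt π / (2 * D₀)) * (1 / Finf x))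
    (hG₂ : ∀ x, G₂ x = G₀ x / Finf x) :
    0 < D₀ ∧
    (G₂ ω = D₀ * c / (ℓ * Real.sqrt π)) ∧
    (∀ y > (0:ℝ), G₂ y = D₀ * c / (ℓ * Real.sqrt π) → y = ω) := by
  have hαpos : 0 < α := by rw [hα]; positivity
  have hD₀pos : 0 < D₀ := by rw [hD₀]; have := erf_pos hωpos; positivity
  set K := γ * (1 - ε) * √π / (2 * D₀) with hK
  have hG₂_eq : ∀ x, 0 < x → G₂ x = (x + K * (erf x * exp (x ^ 2))) * (erf x * exp (x ^ 2)) := by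
    intro x hx
    have := erf_pos hx
    rw [hG₂, hG₀, hFinf, exp_neg]
    field_simp
  have hK_erf : K * erf ω = γ * (1 - ε) * k / (2 * q₀ * √α) := by
    have := sqrt_pos.2 hαpos
    have := erf_pos hωpos
    rw [hK, hD₀, sqrt_mul pi_pos.le]
    field_simp
  have hG₂ω : G₂ ω = D₀ * c / (ℓ * √π) := by
    rw [hG₂_eq ω hωpos, ← flux_rhs_mul_erf hρ hc hk hℓ hα hD₀, ← hωeq, ← hK_erf]
    ring
  refine ⟨hD₀pos, hG₂ω, fun y hy hy_eq => ?_⟩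
  have hK_nonneg : 0 ≤ K := by
    have : 0 < 1 - ε := by linarith
    positivity
  refine (strictMonoOn_add_mul_mul strictMonoOn_erf_mul_exp_sq
    (fun x hx => mul_pos (erf_pos hx) (exp_pos _)) hK_nonneg).injOn hy hωpos ?_
  simp only [← hG₂_eq y hy, ← hG₂_eq ω hωpos, hy_eq, hG₂ω]

/-- Equivalence of the heat-flux problem with the temperature problem: with
`D₀ = (q₀√(πα)/k) erf ω` one has `D₀ > 0`, and `ω` is the unique positive solution of
the temperature-problem equation `G₂(x) = D₀ c/(ℓ√π)`. -/
theorem stmt_18 (ρ c k ℓ γ q₀ α ε ω D₀ : ℝ)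
    (hρ : 0 < ρ) (hc : 0 < c) (hk : 0 < k) (hℓ : 0 < ℓ) (hγ : 0 < γ) (hq0 : 0 < q₀)
    (hα : α = k / (ρ * c)) (hε0 : 0 < ε) (hε1 : ε < 1)
    (hq : q₀ > Real.sqrt (γ * (1 - ε) * ρ * ℓ * k / 2))
    (hωpos : 0 < ω)
    (hωeq : (ω + (γ * (1 - ε) * k / (2 * q₀ * Real.sqrt α)) * Real.exp (ω ^ 2)) *
      Real.exp (ω ^ 2) = q₀ / (ρ * ℓ * Real.sqrt α))
    (hωuniq : ∀ y > (0:ℝ),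
      (y + (γ * (1 - ε) * k / (2 * q₀ * Real.sqrt α)) * Real.exp (y ^ 2)) *
        Real.exp (y ^ 2) = q₀ / (ρ * ℓ * Real.sqrt α) → y = ω)
    (hD₀ : D₀ = (q₀ * Real.sqrt (π * α) / k) * erf ω)
    (Finf G₀ G₂ : ℝ → ℝ)
    (hFinf : ∀ x, Finf x = Real.exp (-x ^ 2) / erf x)
    (hG₀ : ∀ x, G₀ x = x + (γ * (1 - ε) * Real.sqrt π / (2 * D₀)) * (1 / Finf x))
    (hG₂ : ∀ x, G₂ x = G₀ x / Finf x) :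
    0 < D₀ ∧
    (G₂ ω = D₀ * c / (ℓ * Real.sqrt π)) ∧
    (∀ y > (0:ℝ), G₂ y = D₀ * c / (ℓ * Real.sqrt π) → y = ω) :=
  stmt_18_general ρ c k ℓ γ q₀ α ε ω D₀ hρ hc hk hℓ hγ hq0 hα hε1 hωpos hωeq hD₀ Finf G₀ G₂ hFinf
    hG₀ hG₂
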